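/- arXiv:2311.11744 — 5 statements merged into one kernel-verified Lean document; each statement's English description precedes it below -/
import Mathlib

section
/- For every natural number n, the number of monotone Boolean functions of n+2 variables equals the sum over all pairs (x, y) of monotone Boolean functions of n variables of the square of the interval size: d_{n+2} = Σ_{x ∈ D_n} Σ_{y ∈ D_n} (|Icc x y|)², where Icc x y = {z ∈ D_n : x ≤ z ≤ y}. -/
/-- `D_n`, the poset of monotone Boolean functions of `n` variables. -/
abbrev DedekindPoset (n : ℕ) : Type := (Fin n → Bool) →o Bool

noncomputable instance (n : ℕ) : Fintype (DedekindPoset n) :=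
  Fintype.ofInjective (fun f => (f : (Fin n → Bool) → Bool)) DFunLike.coe_injective

/-!
Splitting off the first two coordinates, a monotone function on `B^(n+2)` is a monotone map
`B × B → D_n`, i.e. a square `x ≤ z₁, z₂ ≤ y` in `D_n` with corners
`x = f(0,0)`, `z₁ = f(0,1)`, `z₂ = f(1,0)`, `y = f(1,1)`. For fixed `x` and `y` the two middle
corners range independently over `Icc x y`.
-/

namespace OrderHom

variable {α β : Type*} [Preorder α] [Preorder β]

def piFinSuccCurry (n : ℕ) :
    ((Fin (n + 1) → α) →o β) ≃o (α →o (Fin n → α) →o β) :=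
  (OrderIso.arrowCongr (Fin.consOrderIso fun _ => α).symm (OrderIso.refl β)).trans curry

def ofLE {a b : α} (h : a ≤ b) : Bool →o α where
  toFun t := cond t b a
  monotone' := by
    rintro (_ | _) (_ | _) ht
    exacts [le_rfl, h, absurd ht (by decide), le_rfl]

theorem ofLE_le_ofLE {a b c d : α} {hab : a ≤ b} {hcd : c ≤ d} (hac : a ≤ c) (hbd : b ≤ d) :
    ofLE hab ≤ ofLE hcd := by
  rintro (_ | _)
  exacts [hac, hbd]

variable (β) in
def boolBoolEquivSigmaIcc :
    (Bool →o Bool →o β) ≃ Σ p : β × β, Set.Icc p.1 p.2 × Set.Icc p.1 p.2 where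
  toFun f := ⟨(f false false, f true true),
    ⟨f false true, (f false).mono (Bool.false_le _), f.mono (Bool.false_le _) true⟩,
    ⟨f true false, f.mono (Bool.false_le _) false, (f true).mono (Bool.false_le _)⟩⟩
  invFun := fun ⟨_, z₁, z₂⟩ => ofLE (ofLE_le_ofLE (hab := z₁.2.1) (hcd := z₂.2.2) z₂.2.1 z₁.2.2)
  left_inv f := by ext (_ | _) (_ | _) <;> rfl
  right_inv _ := rfl

theorem card_boolBool_eq_sum_sq_card_Icc [Fintype β] :
    Nat.card (Bool →o Bool →o β) = ∑ x : β, ∑ y : β, Nat.card (Set.Icc x y) ^ 2 := by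
  classical
  rw [Nat.card_congr (boolBoolEquivSigmaIcc β), Nat.card_sigma, Fintype.sum_prod_type]
  simp only [Nat.card_prod, sq]

end OrderHom

def DedekindPoset.addTwoEquiv (n : ℕ) :
    DedekindPoset (n + 2) ≃o (Bool →o Bool →o DedekindPoset n) :=
  (OrderHom.piFinSuccCurry (n + 1)).trans
    (OrderIso.arrowCongr (OrderIso.refl Bool) (OrderHom.piFinSuccCurry n))

/-- The `n`-th Dedekind number `d_n` satisifes
`d_(n+2) = Σ_{x ∈ D_n} Σ_{y ∈ D_n} (#Icc x y)²`. -/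
theorem dedekind_add_two_eq_sum_sq_intervals (n : ℕ) :
    Nat.card (DedekindPoset (n + 2)) =
      ∑ x : DedekindPoset n, ∑ y : DedekindPoset n,
        (Nat.card {z : DedekindPoset n // x ≤ z ∧ z ≤ y}) ^ 2 :=
  (Nat.card_congr (DedekindPoset.addTwoEquiv n).toEquiv).trans
    OrderHom.card_boolBool_eq_sum_sq_card_Icc
end

section
/- For every natural number n, the number of monotone Boolean functions of n+1 variables equals the number of ordered pairs (x, y) of monotone Boolean functions of n variables with x ≤ y; equivalently, d_{n+1} = Σ_{x ∈ D_n} |{y ∈ D_n : x ≤ y}|. -/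
def OrderHom.boolEquivSigmaLE (γ : Type*) [Preorder γ] :
    (Bool →o γ) ≃ Σ x : γ, {y : γ // x ≤ y} where
  toFun f := ⟨f false, f true, f.mono (by decide)⟩
  invFun p := ⟨fun b => bif b then p.2.1 else p.1, by
    rintro (_ | _) (_ | _) h
    exacts [le_rfl, p.2.2, absurd h (by decide), le_rfl]⟩
  left_inv f := by ext (_ | _) <;> rfl
  right_inv _ := rfl

def DedekindPoset.succEquiv (n : ℕ) :
    DedekindPoset (n + 1) ≃ Σ x : DedekindPoset n, {y : DedekindPoset n // x ≤ y} :=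
  ((Fin.consOrderIso fun _ => Bool).symm.arrowCongr (OrderIso.refl Bool)).toEquiv
    |>.trans OrderHom.curry.toEquiv |>.trans (OrderHom.boolEquivSigmaLE _)

/-- The `n`-th Dedekind number `d_n` satisfies
`d_(n+1) = Σ_{x ∈ D_n} #{y ∈ D_n : x ≤ y}`. -/
theorem dedekind_succ_eq_sum_upsets (n : ℕ) :
    Nat.card (DedekindPoset (n + 1)) =
      ∑ x : DedekindPoset n, Nat.card {y : DedekindPoset n // x ≤ y} := by
  rw [Nat.card_congr (DedekindPoset.succEquiv n), Nat.card_sigma]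
end

section
/- Let n be a natural number and let x₀,x₁,x₂,x₃ ∈ D_n and y₀,y₁,y₂,y₃ ∈ D_n satisfy x₀ ≤ x₁ ≤ x₃, x₀ ≤ x₂ ≤ x₃, y₀ ≤ y₁ ≤ y₃, and y₀ ≤ y₂ ≤ y₃. Then the number of quadruples (f₀,f₁,f₂,f₃) of elements of D_n satisfying f₀ ≤ f₁ ≤ f₃, f₀ ≤ f₂ ≤ f₃, and xᵢ ≤ fᵢ ≤ yᵢ for all i, equals Σ_{f₀ ∈ Icc x₀ y₀} Σ_{f₃ ∈ Icc x₃ y₃} |Icc (f₀ ⊔ x₁) (f₃ ⊓ y₁)| · |Icc (f₀ ⊔ x₂) (f₃ ⊓ y₂)|, where Icc a b = {z ∈ D_n : a ≤ z ≤ b}. -/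
noncomputable instance (n : ℕ) (p : DedekindPoset n → Prop) :
    Fintype {z : DedekindPoset n // p z} :=
  Fintype.ofFinite _

/-- For quadruples `x = (x₀,x₁,x₂,x₃)` and `y = (y₀,y₁,y₂,y₃)` over `D_n`
representing elements of `D_(n+2)`, the number of quadruples `(f₀,f₁,f₂,f₃)`
with `f₀ ≤ f₁ ≤ f₃`, `f₀ ≤ f₂ ≤ f₃` and `xᵢ ≤ fᵢ ≤ yᵢ` for all `i`
(i.e. `#[x, y]` in `D_(n+2)`) equals
`Σ_{f₀ ∈ Icc x₀ y₀} Σ_{f₃ ∈ Icc x₃ y₃} #Icc (f₀ ⊔ x₁) (f₃ ⊓ y₁) · #Icc (f₀ ⊔ x₂) (f₃ ⊓ y₂)`. -/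
theorem card_interval_eq_double_sum (n : ℕ) (x₀ x₁ x₂ x₃ y₀ y₁ y₂ y₃ : DedekindPoset n)
    (hx01 : x₀ ≤ x₁) (hx13 : x₁ ≤ x₃) (hx02 : x₀ ≤ x₂) (hx23 : x₂ ≤ x₃)
    (hy01 : y₀ ≤ y₁) (hy13 : y₁ ≤ y₃) (hy02 : y₀ ≤ y₂) (hy23 : y₂ ≤ y₃) :
    Nat.card {q : DedekindPoset n × DedekindPoset n × DedekindPoset n × DedekindPoset n //
        q.1 ≤ q.2.1 ∧ q.2.1 ≤ q.2.2.2 ∧ q.1 ≤ q.2.2.1 ∧ q.2.2.1 ≤ q.2.2.2 ∧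
        x₀ ≤ q.1 ∧ q.1 ≤ y₀ ∧ x₁ ≤ q.2.1 ∧ q.2.1 ≤ y₁ ∧
        x₂ ≤ q.2.2.1 ∧ q.2.2.1 ≤ y₂ ∧ x₃ ≤ q.2.2.2 ∧ q.2.2.2 ≤ y₃} =
      ∑ f₀ : {z : DedekindPoset n // x₀ ≤ z ∧ z ≤ y₀},
        ∑ f₃ : {z : DedekindPoset n // x₃ ≤ z ∧ z ≤ y₃},
          Nat.card {z : DedekindPoset n //
              (f₀ : DedekindPoset n) ⊔ x₁ ≤ z ∧ z ≤ (f₃ : DedekindPoset n) ⊓ y₁} *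
          Nat.card {z : DedekindPoset n //
              (f₀ : DedekindPoset n) ⊔ x₂ ≤ z ∧ z ≤ (f₃ : DedekindPoset n) ⊓ y₂} := by
  classical
  have e : {q : DedekindPoset n × DedekindPoset n × DedekindPoset n × DedekindPoset n //
        q.1 ≤ q.2.1 ∧ q.2.1 ≤ q.2.2.2 ∧ q.1 ≤ q.2.2.1 ∧ q.2.2.1 ≤ q.2.2.2 ∧
        x₀ ≤ q.1 ∧ q.1 ≤ y₀ ∧ x₁ ≤ q.2.1 ∧ q.2.1 ≤ y₁ ∧
        x₂ ≤ q.2.2.1 ∧ q.2.2.1 ≤ y₂ ∧ x₃ ≤ q.2.2.2 ∧ q.2.2.2 ≤ y₃} ≃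
      Σ f₀ : {z : DedekindPoset n // x₀ ≤ z ∧ z ≤ y₀},
      Σ f₃ : {z : DedekindPoset n // x₃ ≤ z ∧ z ≤ y₃},
        {z : DedekindPoset n //
            (f₀ : DedekindPoset n) ⊔ x₁ ≤ z ∧ z ≤ (f₃ : DedekindPoset n) ⊓ y₁} ×
        {z : DedekindPoset n //
            (f₀ : DedekindPoset n) ⊔ x₂ ≤ z ∧ z ≤ (f₃ : DedekindPoset n) ⊓ y₂} := by
    refine
      { toFun := fun q =>
          ⟨⟨q.1.1, q.2.2.2.2.2.1, q.2.2.2.2.2.2.1⟩,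
           ⟨q.1.2.2.2, q.2.2.2.2.2.2.2.2.2.2.2.1, q.2.2.2.2.2.2.2.2.2.2.2.2⟩,
           ⟨q.1.2.1, sup_le q.2.1 q.2.2.2.2.2.2.2.1, le_inf q.2.2.1 q.2.2.2.2.2.2.2.2.1⟩,
           ⟨q.1.2.2.1, sup_le q.2.2.2.1 q.2.2.2.2.2.2.2.2.2.1,
            le_inf q.2.2.2.2.1 q.2.2.2.2.2.2.2.2.2.2.1⟩⟩
        invFun := fun s =>
          ⟨(s.1.1, s.2.2.1.1, s.2.2.2.1, s.2.1.1), ?_⟩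
        left_inv := fun q => rfl
        right_inv := fun s => rfl }
    obtain ⟨⟨f₀, h₀⟩, ⟨f₃, h₃⟩, ⟨f₁, h₁⟩, ⟨f₂, h₂⟩⟩ := s
    refine ⟨le_trans le_sup_left h₁.1, le_trans h₁.2 inf_le_left,
      le_trans le_sup_left h₂.1, le_trans h₂.2 inf_le_left,
      h₀.1, h₀.2, le_trans le_sup_right h₁.1, le_trans h₁.2 inf_le_right,
      le_trans le_sup_right h₂.1, le_trans h₂.2 inf_le_right, h₃.1, h₃.2⟩
  simp only [Nat.card_eq_fintype_card]
  rw [Fintype.card_congr e, Fintype.card_sigma]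
  exact Finset.sum_congr rfl fun f₀ _ => by
    rw [Fintype.card_sigma]
    exact Finset.sum_congr rfl fun f₃ _ => Fintype.card_prod _ _
end

section
/- Let n be a natural number and consider the action of the symmetric group on Fin n on D_n by permuting input variables. If T is a finite set of monotone Boolean functions of n variables containing exactly one representative from each orbit of this action, then d_{n+1} = Σ_{r ∈ T} γ(r) · |{g ∈ D_n : r ≤ g}|, where γ(r) is the cardinality of the orbit of r. -/
/-- The action of a permutation `π` of the variables on `f ∈ D_n`:
`(π·f)(x) = f(x ∘ π)`, which is again monotone. -/
def permAct {n : ℕ} (π : Equiv.Perm (Fin n)) (f : DedekindPoset n) : DedekindPoset n :=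
  ⟨fun x => f (x ∘ π), fun _ _ h => f.monotone (fun i => h (π i))⟩

/-!
A monotone function of `n + 1` variables is the same as the pair `f₀ ≤ f₁` in `D_n` of its
restrictions to `x_{n+1} = false` and `x_{n+1} = true`, so `d_{n+1} = Σ_{f ∈ D_n} #{g : f ≤ g}`.
Permuting the variables is an order automorphism of `D_n`, so the summand is constant on orbits,
and grouping the sum by orbits gives the formula.
-/

instance OrderHom.instFinite {α β : Type*} [Preorder α] [Preorder β] [Finite α] [Finite β] :
    Finite (α →o β) :=
  FunLike.finite _

def OrderHom.fromBoolEquiv (α : Type*) [Preorder α] :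
    (Bool →o α) ≃ {p : α × α // p.1 ≤ p.2} where
  toFun f := ⟨(f false, f true), f.monotone (Bool.false_le true)⟩
  invFun p := ⟨fun b => cond b p.1.2 p.1.1, by
    rintro (_ | _) (_ | _) h
    exacts [le_rfl, p.2, absurd h (by decide), le_rfl]⟩
  left_inv f := by ext (_ | _) <;> rfl
  right_inv _ := rfl

theorem Nat.card_subtype_fst_le_snd (α : Type*) [Preorder α] [Fintype α] :
    Nat.card {p : α × α // p.1 ≤ p.2} = ∑ a : α, Nat.card {b // a ≤ b} := by
  rw [Nat.card_congr (Equiv.subtypeProdEquivSigmaSubtype fun a b : α => a ≤ b)]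
  exact Nat.card_sigma

namespace MulAction

variable {G α : Type*} [Group G] [MulAction G α]

theorem card_subtype_smul_le [Preorder α] [CovariantClass G α HSMul.hSMul LE.le]
    (g : G) (a : α) :
    Nat.card {b // g • a ≤ b} = Nat.card {b // a ≤ b} :=
  Nat.card_congr <| .symm <| (toPerm g).subtypeEquiv fun b =>
    ⟨smul_le_smul_left g, fun h => by simpa using smul_le_smul_left g⁻¹ h⟩

theorem sum_eq_sum_card_orbit_nsmul [Fintype α] {M : Type*} [AddCommMonoid M] {φ : α → M}
    (hφ : ∀ (g : G) a, φ (g • a) = φ a) {T : Finset α}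
    (hT : ∀ a, ∃! r, r ∈ T ∧ r ∈ orbit G a) :
    ∑ a, φ a = ∑ r ∈ T, Nat.card (orbit G r) • φ r := by
  classical
  have hcover : (Finset.univ : Finset α) = T.biUnion fun r => (orbit G r).toFinset := by
    ext a
    obtain ⟨r, ⟨hr, hra⟩, -⟩ := hT a
    simpa using ⟨r, hr, mem_orbit_symm.mp hra⟩
  have hdisj : (T : Set α).PairwiseDisjoint fun r => (orbit G r).toFinset := by
    intro r hr r' hr' hne
    refine Finset.disjoint_left.mpr fun a ha ha' => hne ?_
    rw [Set.mem_toFinset] at ha ha'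
    exact (hT a).unique ⟨hr, mem_orbit_symm.mp ha⟩ ⟨hr', mem_orbit_symm.mp ha'⟩
  rw [hcover, Finset.sum_biUnion hdisj]
  refine Finset.sum_congr rfl fun r _ => ?_
  have hconst : ∀ a ∈ (orbit G r).toFinset, φ a = φ r := by
    intro a ha
    obtain ⟨g, rfl⟩ := Set.mem_toFinset.mp ha
    exact hφ g r
  rw [Finset.sum_congr rfl hconst, Finset.sum_const, ← Nat.card_eq_card_toFinset]

end MulAction

instance (n : ℕ) : MulAction (Equiv.Perm (Fin n)) (DedekindPoset n) where
  smul := permAct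
  one_smul _ := rfl
  mul_smul _ _ _ := rfl

instance (n : ℕ) : CovariantClass (Equiv.Perm (Fin n)) (DedekindPoset n) HSMul.hSMul LE.le :=
  ⟨fun π _ _ h x => h (x ∘ π)⟩

theorem card_dedekindPoset_succ (n : ℕ) :
    Nat.card (DedekindPoset (n + 1)) =
      Nat.card {p : DedekindPoset n × DedekindPoset n // p.1 ≤ p.2} :=
  Nat.card_congr <| ((OrderIso.arrowCongr (Fin.snocOrderIso fun _ => Bool).symm
    (OrderIso.refl Bool)).trans OrderHom.curry).toEquiv.trans (OrderHom.fromBoolEquiv _)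

/-- If `T` contains exactly one representative from each orbit of the action of
the symmetric group on `D_n`, then `d_(n+1) = Σ_{r ∈ T} γ(r) · #{g : r ≤ g}`,
where `γ(r)` is the orbit size of `r`. -/
theorem dedekind_succ_eq_sum_over_representatives (n : ℕ) (T : Finset (DedekindPoset n))
    (hT : ∀ f : DedekindPoset n, ∃! r, r ∈ T ∧ ∃ π : Equiv.Perm (Fin n), permAct π f = r) :
    Nat.card (DedekindPoset (n + 1)) =
      ∑ r ∈ T, Nat.card {g : DedekindPoset n // ∃ π : Equiv.Perm (Fin n), permAct π r = g} *
        Nat.card {g : DedekindPoset n // r ≤ g} := by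
  have := Fintype.ofFinite (DedekindPoset n)
  rw [card_dedekindPoset_succ, Nat.card_subtype_fst_le_snd,
    MulAction.sum_eq_sum_card_orbit_nsmul
      (MulAction.card_subtype_smul_le (α := DedekindPoset n)) hT]
  -- `orbit _ r` is by definition `{g | ∃ π, π • r = g}`, and `•` on `ℕ` is `*`
  rfl
end

section
/- For every natural number n, the number of monotone Boolean functions of n+2 variables equals the number of quadruples (f₀,f₁,f₂,f₃) of monotone Boolean functions of n variables satisfying f₀ ≤ f₁ ≤ f₃ and f₀ ≤ f₂ ≤ f₃. -/
def OrderHom.boolProdBoolEquiv (α : Type*) [Preorder α] :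
    (Bool × Bool →o α) ≃
      {q : α × α × α × α // q.1 ≤ q.2.1 ∧ q.2.1 ≤ q.2.2.2 ∧ q.1 ≤ q.2.2.1 ∧ q.2.2.1 ≤ q.2.2.2} where
  toFun f := ⟨(f (false, false), f (false, true), f (true, false), f (true, true)),
    f.mono (by decide), f.mono (by decide), f.mono (by decide), f.mono (by decide)⟩
  invFun q := ⟨fun x => bif x.1 then (bif x.2 then q.1.2.2.2 else q.1.2.2.1)
      else (bif x.2 then q.1.2.1 else q.1.1), by
    obtain ⟨⟨f₀, f₁, f₂, f₃⟩, h₀₁, h₁₃, h₀₂, h₂₃⟩ := q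
    have h₀₃ := h₀₁.trans h₁₃
    rintro ⟨a, b⟩ ⟨c, d⟩ ⟨hac, hbd⟩
    cases a <;> cases b <;> cases c <;> cases d <;> simp_all [Bool.le_iff_imp]⟩
  left_inv f := by
    ext ⟨a, b⟩
    cases a <;> cases b <;> rfl
  right_inv _ := rfl

def DedekindPoset.succOrderIso (n : ℕ) :
    DedekindPoset (n + 1) ≃o (Bool →o DedekindPoset n) :=
  (OrderIso.arrowCongr (Fin.consOrderIso fun _ => Bool).symm (.refl Bool)).trans OrderHom.curry

def DedekindPoset.addTwoOrderIso (n : ℕ) :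
    DedekindPoset (n + 2) ≃o (Bool × Bool →o DedekindPoset n) :=
  (succOrderIso (n + 1)).trans <|
    (OrderIso.arrowCongr (.refl Bool) (succOrderIso n)).trans OrderHom.curry.symm

/-- `d_(n+2)` equals the number of quadruples `(f₀,f₁,f₂,f₃)` of monotone Boolean
functions of `n` variables with `f₀ ≤ f₁ ≤ f₃` and `f₀ ≤ f₂ ≤ f₃`. -/
theorem dedekind_add_two_eq_card_quadruples (n : ℕ) :
    Nat.card (DedekindPoset (n + 2)) =
      Nat.card {q : DedekindPoset n × DedekindPoset n × DedekindPoset n × DedekindPoset n //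
        q.1 ≤ q.2.1 ∧ q.2.1 ≤ q.2.2.2 ∧ q.1 ≤ q.2.2.1 ∧ q.2.2.1 ≤ q.2.2.2} :=
  Nat.card_congr <|
    (DedekindPoset.addTwoOrderIso n).toEquiv.trans (OrderHom.boolProdBoolEquiv _)
end
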